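/- For every integer n ≥ 1, the denominator of the n-th Bernoulli polynomial equals the radical of the denominator of the sum-of-powers polynomial S_n(x), i.e., DB_n = rad(denom(S_n(x))) = rad((n+1) · D_{n+1}). -/

import Mathlib

/-- A rational polynomial has only integral coefficients. -/
def IsIntPoly (f : Polynomial ℚ) : Prop := ∀ i, (f.coeff i).den = 1

/-- The least positive integer `d` such that `d • f` has only integral coefficients. -/
noncomputable def polyDenom (f : Polynomial ℚ) : ℕ :=
  sInf {d : ℕ | 0 < d ∧ IsIntPoly ((d : ℚ) • f)}

/-- Sum of base-`p` digits of `n`. -/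
def sd (p n : ℕ) : ℕ := (Nat.digits p n).sum

/-- Radical (squarefree kernel) of `n`. -/
def rad (n : ℕ) : ℕ := ∏ p ∈ n.primeFactors, p

/-- `D n = denom (B_n(x) - B_n)`. -/
noncomputable def D (n : ℕ) : ℕ :=
  polyDenom (Polynomial.bernoulli n - Polynomial.C (bernoulli n))

/-- `DB n = denom (B_n(x))`. -/
noncomputable def DB (n : ℕ) : ℕ := polyDenom (Polynomial.bernoulli n)

/-- `D̂ n`: product of primes `p` with `p ∤ n` and `s_p(n) ≥ p`.
(Any such prime satisfies `p ≤ s_p(n) ≤ n`.) -/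
def Dhat (n : ℕ) : ℕ :=
  ∏ p ∈ (Finset.range (n + 1)).filter (fun p => p.Prime ∧ ¬ p ∣ n ∧ p ≤ sd p n), p

/-- `D̃ n`: product of primes `p` with `p ∣ n` and `s_p(n) ≥ p`. -/
def Dtilde (n : ℕ) : ℕ :=
  ∏ p ∈ (Finset.range (n + 1)).filter (fun p => p.Prime ∧ p ∣ n ∧ p ≤ sd p n), p

/-- `Ď n`: product of primes `p` with `p ∣ n` and `s_p(n) < p`. -/
def Dcheck (n : ℕ) : ℕ :=
  ∏ p ∈ (Finset.range (n + 1)).filter (fun p => p.Prime ∧ p ∣ n ∧ sd p n < p), p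

/-- `D⁺ n`: product of primes `p` with `p > √n` and `s_p(n) ≥ p`. -/
def Dplus (n : ℕ) : ℕ :=
  ∏ p ∈ (Finset.range (n + 1)).filter (fun p => p.Prime ∧ n < p ^ 2 ∧ p ≤ sd p n), p

/-- The sum-of-powers polynomial `S_n(x) = (B_{n+1}(x) - B_{n+1}) / (n+1)`. -/
noncomputable def Spoly (n : ℕ) : Polynomial ℚ :=
  Polynomial.C (((n : ℚ) + 1)⁻¹) *
    (Polynomial.bernoulli (n + 1) - Polynomial.C (bernoulli (n + 1)))

/-
By von Staudt–Clausen, for `k ≥ 1` the denominator of `B_k` is squarefree and divisible by a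
prime `p` exactly when `(p - 1) ∣ k` and `k` is even or `1`. So every coefficient
`B_{n-i} C(n, i)` of `B_n(x)` has squarefree denominator, `DB_n` is squarefree, and it suffices
to compare prime divisors. By Kummer, `p ∤ C(m, k)` iff `k + (m - k)` has no carry in base `p`;
picking the digits of `k` among those of `m` shows that `p ∣ D_m` iff `s_p(m) ≥ p`, and likewise
that `p ∣ DB_n` iff `s_p(n) ≥ p` or `(p - 1) ∣ n`. Comparing the last base-`p` digits of `n` and
`n + 1` turns this into `p ∣ n + 1` or `s_p(n + 1) ≥ p`, which is the criterion for `p` to divide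
both `(n + 1) · D_{n+1}` and the denominator of `S_n`.
-/

open Finset

namespace Rat

theorem den_mul_natCast_eq (x : ℚ) (c : ℕ) : (x * c).den = x.den / c.gcd x.den := by
  rw [mul_den, den_natCast, num_natCast, mul_one, Int.natAbs_mul, Int.natAbs_natCast,
    Nat.Coprime.gcd_mul_left_cancel _ x.reduced]

theorem den_natCast_mul_eq_one_iff (d : ℕ) (q : ℚ) : ((d : ℚ) * q).den = 1 ↔ q.den ∣ d := by
  rw [mul_comm, den_mul_natCast_eq]
  constructor
  · intro h
    have := Nat.div_mul_cancel (Nat.gcd_dvd_right d q.den)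
    rw [h, one_mul] at this
    exact this ▸ Nat.gcd_dvd_left d q.den
  · intro h
    rw [Nat.gcd_eq_right h, Nat.div_self q.den_pos]

theorem prime_dvd_den_mul_natCast_iff {p : ℕ} (hp : p.Prime) {x : ℚ} (hx : Squarefree x.den)
    (c : ℕ) : p ∣ (x * c).den ↔ p ∣ x.den ∧ ¬ p ∣ c := by
  rw [den_mul_natCast_eq]
  have hsplit : c.gcd x.den * (x.den / c.gcd x.den) = x.den :=
    Nat.mul_div_cancel' (Nat.gcd_dvd_right _ _)
  constructor
  · intro h
    have hd : p ∣ x.den := h.trans (Nat.div_dvd_of_dvd (Nat.gcd_dvd_right _ _))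
    refine ⟨hd, fun hc => ?_⟩
    have hsq : p * p ∣ x.den := hsplit ▸ Nat.mul_dvd_mul (Nat.dvd_gcd hc hd) h
    exact hp.one_lt.ne' (Nat.isUnit_iff.1 (hx p hsq))
  · rintro ⟨hd, hc⟩
    rw [← hsplit] at hd
    exact (hp.dvd_mul.1 hd).resolve_left fun h => hc (h.trans (Nat.gcd_dvd_left _ _))

theorem prime_dvd_den_inv_natCast_mul_iff {p m : ℕ} (hp : p.Prime) (hm : ¬ p ∣ m) (x : ℚ) :
    p ∣ ((m : ℚ)⁻¹ * x).den ↔ p ∣ x.den := by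
  have hm0 : m ≠ 0 := by rintro rfl; exact hm (dvd_zero p)
  constructor
  · intro h
    have := h.trans (mul_den_dvd _ _)
    rw [inv_natCast_den, if_neg hm0] at this
    exact (hp.dvd_mul.1 this).resolve_left hm
  · intro h
    have hx : x = (m : ℚ) * ((m : ℚ)⁻¹ * x) := by
      rw [← mul_assoc, mul_inv_cancel₀ (Nat.cast_ne_zero.2 hm0), one_mul]
    have := mul_den_dvd (m : ℚ) ((m : ℚ)⁻¹ * x)
    rw [← hx, den_natCast, one_mul] at this
    exact h.trans this

theorem den_add_eq_mul_of_coprime {x y : ℚ} (h : x.den.Coprime y.den) :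
    (x + y).den = x.den * y.den := by
  have hx : x.den ∣ (x + y).den := by
    have := sub_den_dvd (x + y) y
    rw [add_sub_cancel_right] at this
    exact h.dvd_of_dvd_mul_right this
  have hy : y.den ∣ (x + y).den := by
    have := sub_den_dvd (x + y) x
    rw [add_sub_cancel_left] at this
    exact h.symm.dvd_of_dvd_mul_right this
  exact Nat.dvd_antisymm (add_den_dvd x y) (h.mul_dvd_of_dvd_of_dvd hx hy)

theorem den_sum_one_div_primes {S : Finset ℕ} (hS : ∀ p ∈ S, p.Prime) :
    (∑ p ∈ S, (1 : ℚ) / p).den = ∏ p ∈ S, p := by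
  induction S using Finset.induction_on with
  | empty => simp
  | @insert q S hq ih =>
    have hS' : ∀ p ∈ S, p.Prime := fun p hp => hS p (mem_insert_of_mem hp)
    have hqp := hS q (mem_insert_self q S)
    have hden : ((1 : ℚ) / q).den = q := by rw [one_div, inv_natCast_den, if_neg hqp.ne_zero]
    have hcop : ((1 : ℚ) / q).den.Coprime (∑ p ∈ S, (1 : ℚ) / p).den := by
      rw [hden, ih hS']
      exact Nat.Coprime.prod_right fun p hp =>
        (Nat.coprime_primes hqp (hS' p hp)).2 fun h => hq (h ▸ hp)
    rw [sum_insert hq, prod_insert hq, den_add_eq_mul_of_coprime hcop, hden, ih hS']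

end Rat

theorem den_bernoulli_two_mul (j : ℕ) :
    (bernoulli (2 * j)).den = ∏ p ∈ range (2 * j + 2) with p.Prime ∧ (p - 1) ∣ 2 * j, p := by
  obtain ⟨N, hN⟩ := Bernoulli.vonStaudt_clausen j
  rw [eq_sub_of_add_eq hN.symm, Rat.intCast_sub_den,
    Rat.den_sum_one_div_primes fun p hp => (mem_filter.1 hp).2.1]

theorem den_bernoulli (k : ℕ) :
    (bernoulli k).den =
      ∏ p ∈ range (k + 2) with p.Prime ∧ (p - 1) ∣ k ∧ (Even k ∨ k = 1), p := by
  obtain ⟨j, rfl | rfl⟩ := Nat.even_or_odd' k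
  · rw [den_bernoulli_two_mul]
    refine prod_congr (filter_congr fun p _ => ?_) fun _ _ => rfl
    simp
  · rcases Nat.eq_zero_or_pos j with rfl | hj
    · rw [bernoulli_one, show (-1 / 2 : ℚ) = -(2 : ℚ)⁻¹ by norm_num, Rat.neg_den,
        Rat.inv_ofNat_den]
      decide
    · rw [bernoulli_eq_zero_of_odd (odd_two_mul_add_one j) (by omega), Rat.den_zero,
        filter_false_of_mem fun p _ => by simp; omega, prod_empty]

theorem squarefree_den_bernoulli (k : ℕ) : Squarefree (bernoulli k).den := by
  rw [den_bernoulli]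
  refine squarefree_prod_of_pairwise_isCoprime (fun p hp q hq hpq => ?_)
    fun p hp => (mem_filter.1 hp).2.1.squarefree
  rw [Function.onFun, ← Nat.coprime_iff_isRelPrime]
  exact (Nat.coprime_primes (mem_filter.1 hp).2.1 (mem_filter.1 hq).2.1).2 hpq

theorem prime_dvd_den_bernoulli_iff {p k : ℕ} (hp : p.Prime) (hk : 0 < k) :
    p ∣ (bernoulli k).den ↔ (p - 1) ∣ k ∧ (Even k ∨ k = 1) := by
  rw [den_bernoulli, Prime.dvd_finsetProd_iff hp.prime]
  constructor
  · rintro ⟨q, hq, hpq⟩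
    obtain ⟨-, hq, hcond⟩ := mem_filter.1 hq
    rwa [(Nat.prime_dvd_prime_iff_eq hp hq).1 hpq]
  · intro hcond
    refine ⟨p, mem_filter.2 ⟨mem_range.2 ?_, hp, hcond⟩, dvd_rfl⟩
    have := Nat.le_of_dvd hk hcond.1
    omega

section digitSum

variable {p : ℕ}

theorem sd_zero (p : ℕ) : sd p 0 = 0 := by simp [sd]

theorem sd_pos {n : ℕ} (hn : n ≠ 0) : 0 < sd p n := by
  have hlast := List.le_sum_of_mem (List.getLast_mem (Nat.digits_ne_nil_iff_ne_zero (b := p).2 hn))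
  have := Nat.getLast_digit_ne_zero p hn
  unfold sd
  omega

theorem sd_eq_mod_add (hp : 1 < p) (n : ℕ) : sd p n = n % p + sd p (n / p) := by
  rcases Nat.eq_zero_or_pos n with rfl | hn
  · simp [sd]
  · simp [sd, Nat.digits_def' hp hn]

theorem sd_add_mul (hp : 1 < p) {r : ℕ} (hr : r < p) (q : ℕ) : sd p (r + p * q) = r + sd p q := by
  rw [sd_eq_mod_add hp, Nat.add_mul_mod_self_left, Nat.mod_eq_of_lt hr,
    Nat.add_mul_div_left _ _ (by omega), Nat.div_eq_of_lt hr, zero_add]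

theorem sd_of_lt (hp : 1 < p) {n : ℕ} (hn : n < p) : sd p n = n := by
  simpa [sd_zero] using sd_add_mul hp hn 0

theorem sd_mul_left (hp : 1 < p) (q : ℕ) : sd p (p * q) = sd p q := by
  simpa using sd_add_mul hp (by omega : 0 < p) q

theorem sub_one_dvd_iff_dvd_sd (hp : 1 < p) (n : ℕ) : (p - 1) ∣ n ↔ (p - 1) ∣ sd p n := by
  rcases (show p = 2 ∨ 2 < p by omega) with rfl | hp2
  · simp
  · exact Nat.dvd_iff_dvd_digits_sum (p - 1) p (by rw [Nat.mod_eq_sub_mod (by omega),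
      Nat.sub_sub_self (by omega), Nat.mod_eq_of_lt (by omega)]) n

theorem sub_one_le_sd_of_sub_one_dvd (hp : 1 < p) {n : ℕ} (hn : n ≠ 0) (h : (p - 1) ∣ n) :
    p - 1 ≤ sd p n :=
  Nat.le_of_dvd (sd_pos hn) ((sub_one_dvd_iff_dvd_sd hp n).1 h)

theorem sd_succ_of_not_dvd (hp : 1 < p) {n : ℕ} (h : ¬ p ∣ n + 1) :
    sd p (n + 1) = sd p n + 1 := by
  have hr : n % p + 1 < p := by
    have := Nat.mod_lt n (show 0 < p by omega)
    refine lt_of_le_of_ne this fun he => h ?_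
    exact ⟨n / p + 1, by have := Nat.mod_add_div n p; rw [mul_add]; omega⟩
  have hn : n + 1 = (n % p + 1) + p * (n / p) := by have := Nat.mod_add_div n p; omega
  rw [hn, sd_add_mul hp hr, sd_eq_mod_add hp n]
  omega

theorem sub_one_le_sd_of_dvd_succ (hp : 1 < p) {n : ℕ} (h : p ∣ n + 1) : p - 1 ≤ sd p n := by
  have hr : n % p = p - 1 := by
    have h1 := Nat.mod_lt n (show 0 < p by omega)
    have h2 := (Nat.dvd_iff_mod_eq_zero).1 h
    rw [Nat.add_mod, Nat.one_mod_eq_one.2 (by omega)] at h2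
    by_contra hne
    rw [Nat.mod_eq_of_lt (by omega)] at h2
    omega
  rw [sd_eq_mod_add hp n, hr]
  omega

-- The clause `k % p ≤ m % p` makes `k` even when `p = 2` and `m` is even.
theorem exists_sd_eq_of_le_sd (hp : 1 < p) (m t : ℕ) (ht : t ≤ sd p m) :
    ∃ k ≤ m, k % p ≤ m % p ∧ sd p k = t ∧ sd p k + sd p (m - k) ≤ sd p m := by
  induction m using Nat.strong_induction_on generalizing t with
  | _ m ih =>
  have hm : m = m % p + p * (m / p) := (Nat.mod_add_div m p).symm
  have hmod := Nat.mod_lt m (show 0 < p by omega)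
  rw [sd_eq_mod_add hp m] at ht
  by_cases htr : t ≤ m % p
  · have hmt : m - t = (m % p - t) + p * (m / p) := by omega
    refine ⟨t, by omega, by rwa [Nat.mod_eq_of_lt (by omega)], sd_of_lt hp (by omega), ?_⟩
    rw [hmt, sd_add_mul hp (by omega), sd_of_lt hp (by omega), sd_eq_mod_add hp m]
    omega
  · rcases Nat.eq_zero_or_pos m with rfl | hm0
    · simp [sd_zero] at ht; omega
    obtain ⟨k, hkle, -, hsdk, hsub⟩ :=
      ih (m / p) (Nat.div_lt_self hm0 hp) (t - m % p) (by omega)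
    refine ⟨m % p + p * k, ?_, ?_, ?_, ?_⟩
    · have := Nat.mul_le_mul_left p hkle
      omega
    · rw [Nat.add_mul_mod_self_left, Nat.mod_eq_of_lt hmod]
    · rw [sd_add_mul hp hmod, hsdk]; omega
    · have hmk : m - (m % p + p * k) = p * (m / p - k) := by
        rw [Nat.mul_sub]; omega
      rw [hmk, sd_mul_left hp, sd_add_mul hp hmod, sd_eq_mod_add hp m]
      omega

end digitSum

theorem not_dvd_choose_iff_sd_add_sd_le {p k m : ℕ} [hp : Fact p.Prime] (hk : k ≤ m) :
    ¬ p ∣ m.choose k ↔ sd p k + sd p (m - k) ≤ sd p m := by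
  have hkummer := sub_one_mul_padicValNat_choose_eq_sub_sum_digits (p := p) hk
  have hp1 : p - 1 ≠ 0 := by have := hp.out.two_le; omega
  rw [dvd_iff_padicValNat_ne_zero (Nat.choose_pos hk).ne', not_not, sd, sd, sd]
  constructor
  · intro h
    rw [h, mul_zero] at hkummer
    omega
  · intro h
    exact (mul_eq_zero.1 (hkummer.trans (by omega))).resolve_left hp1

theorem le_sd_iff_exists_bernoulli {p : ℕ} [hp : Fact p.Prime] (m : ℕ) :
    p ≤ sd p m ↔
      ∃ k, 0 < k ∧ k < m ∧ p ∣ (bernoulli k).den ∧ ¬ p ∣ m.choose k := by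
  have hp1 := hp.out.one_lt
  constructor
  · intro h
    have hm : m ≠ 0 := by rintro rfl; rw [sd_zero] at h; omega
    by_cases h2 : p = 2 ∧ Odd m
    · obtain ⟨rfl, hodd⟩ := h2
      have hm1 : m ≠ 1 := by rintro rfl; rw [sd_of_lt hp1 hp1] at h; omega
      refine ⟨1, one_pos, by omega, (prime_dvd_den_bernoulli_iff hp.out one_pos).2
        ⟨one_dvd 1, Or.inr rfl⟩, ?_⟩
      rwa [Nat.choose_one_right, ← even_iff_two_dvd, Nat.not_even_iff_odd]
    obtain ⟨k, hkm, hmod, hsdk, hsub⟩ := exists_sd_eq_of_le_sd hp1 m (p - 1) (by omega)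
    have hk0 : k ≠ 0 := by rintro rfl; rw [sd_zero] at hsdk; omega
    have hkm' : k ≠ m := by rintro rfl; omega
    have hdvd : (p - 1) ∣ k := (sub_one_dvd_iff_dvd_sd hp1 k).2 (hsdk ▸ dvd_rfl)
    have heven : Even k := by
      rcases hp.out.eq_two_or_odd' with rfl | hodd
      · rw [Nat.even_iff]
        have : m % 2 = 0 := by simpa [Nat.odd_iff] using h2
        omega
      · exact (Nat.Odd.sub_odd hodd odd_one).two_dvd.trans hdvd |> even_iff_two_dvd.2
    refine ⟨k, by omega, by omega, (prime_dvd_den_bernoulli_iff hp.out (by omega)).2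
      ⟨hdvd, Or.inl heven⟩, (not_dvd_choose_iff_sd_add_sd_le hkm).2 hsub⟩
  · rintro ⟨k, hk0, hkm, hden, hchoose⟩
    have hk := sub_one_le_sd_of_sub_one_dvd hp1 hk0.ne'
      ((prime_dvd_den_bernoulli_iff hp.out hk0).1 hden).1
    have hmk := sd_pos (p := p) (show m - k ≠ 0 by omega)
    have := (not_dvd_choose_iff_sd_add_sd_le hkm.le).1 hchoose
    omega

theorem le_sd_or_sub_one_dvd_iff {p n : ℕ} (hp : 1 < p) (hn : n ≠ 0) :
    p ≤ sd p n ∨ (p - 1) ∣ n ↔ p ∣ n + 1 ∨ p ≤ sd p (n + 1) := by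
  by_cases hd : p ∣ n + 1
  · simp only [hd, true_or, iff_true]
    have := sub_one_le_sd_of_dvd_succ hp hd
    by_contra! h
    exact h.2 ((sub_one_dvd_iff_dvd_sd hp n).2 (by rw [show sd p n = p - 1 by omega]))
  · simp only [hd, false_or, sd_succ_of_not_dvd hp hd]
    constructor
    · rintro (h | h)
      · omega
      · have := sub_one_le_sd_of_sub_one_dvd hp hn h
        omega
    · intro h
      by_contra! h'
      exact h'.2 ((sub_one_dvd_iff_dvd_sd hp n).2 (by rw [show sd p n = p - 1 by omega]))

theorem le_sd_or_dvd_den_bernoulli_iff {p n : ℕ} (hp : p.Prime) (hn : n ≠ 0) :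
    p ≤ sd p n ∨ p ∣ (bernoulli n).den ↔ p ≤ sd p n ∨ (p - 1) ∣ n := by
  rw [prime_dvd_den_bernoulli_iff hp (Nat.pos_of_ne_zero hn)]
  constructor
  · exact Or.imp_right And.left
  · rintro (h | h)
    · exact Or.inl h
    by_cases hpar : Even n ∨ n = 1
    · exact Or.inr ⟨h, hpar⟩
    left
    push Not at hpar
    obtain ⟨q, rfl⟩ := Nat.not_even_iff_odd.1 hpar.1
    have hp2 : p = 2 := (hp.eq_two_or_odd').resolve_right fun hodd =>
      hpar.1 (even_iff_two_dvd.2 (((Nat.Odd.sub_odd hodd odd_one).two_dvd).trans h))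
    subst hp2
    have hq : q ≠ 0 := by rintro rfl; exact hpar.2 rfl
    rw [add_comm, sd_add_mul one_lt_two one_lt_two]
    have := sd_pos (p := 2) hq
    omega

section polyDenom

open Polynomial

theorem polyDenom_eq_lcm (f : ℚ[X]) : polyDenom f = f.support.lcm fun i => (f.coeff i).den := by
  set L := f.support.lcm fun i => (f.coeff i).den
  have hL : L ≠ 0 := Finset.lcm_ne_zero_iff.2 fun i _ => (f.coeff i).den_nz
  have hset : {d : ℕ | 0 < d ∧ IsIntPoly ((d : ℚ) • f)} = {d : ℕ | 0 < d ∧ L ∣ d} := by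
    ext d
    simp only [Set.mem_ofPred_eq, IsIntPoly, coeff_smul, smul_eq_mul,
      Rat.den_natCast_mul_eq_one_iff, Finset.lcm_dvd_iff, L]
    refine and_congr_right fun _ => ⟨fun h i _ => h i, fun h i => ?_⟩
    by_cases hi : i ∈ f.support
    · exact h i hi
    · simp [notMem_support_iff.1 hi]
  have hmem := Nat.sInf_mem (s := {d : ℕ | 0 < d ∧ L ∣ d}) ⟨L, Nat.pos_of_ne_zero hL, dvd_rfl⟩
  rw [polyDenom, hset]
  exact le_antisymm (Nat.sInf_le ⟨Nat.pos_of_ne_zero hL, dvd_rfl⟩) (Nat.le_of_dvd hmem.1 hmem.2)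

theorem polyDenom_ne_zero (f : ℚ[X]) : polyDenom f ≠ 0 := by
  rw [polyDenom_eq_lcm]
  exact Finset.lcm_ne_zero_iff.2 fun i _ => (f.coeff i).den_nz

theorem prime_dvd_polyDenom_iff {p : ℕ} (hp : p.Prime) (f : ℚ[X]) :
    p ∣ polyDenom f ↔ ∃ i, p ∣ (f.coeff i).den := by
  rw [polyDenom_eq_lcm]
  constructor
  · intro h
    obtain ⟨i, -, hi⟩ := (Prime.dvd_finsetProd_iff hp.prime _).1 (h.trans (Finset.lcm_dvd_prod _ _))
    exact ⟨i, hi⟩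
  · rintro ⟨i, hi⟩
    by_cases hmem : i ∈ f.support
    · exact hi.trans (Finset.dvd_lcm hmem)
    · rw [notMem_support_iff.1 hmem, Rat.den_zero] at hi
      exact absurd (Nat.dvd_one.1 hi) hp.ne_one

theorem squarefree_polyDenom {f : ℚ[X]} (hf : ∀ i, Squarefree (f.coeff i).den) :
    Squarefree (polyDenom f) := by
  rw [Nat.squarefree_iff_factorization_le_one (polyDenom_ne_zero f)]
  intro p
  rw [polyDenom_eq_lcm, Finset.factorization_lcm fun i _ => (f.coeff i).den_nz]
  exact Finset.sup_le fun i _ =>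
    (Nat.squarefree_iff_factorization_le_one (f.coeff i).den_nz).1 (hf i) p

end polyDenom

theorem eq_rad_of_squarefree {a b : ℕ} (ha : Squarefree a) (hb : b ≠ 0)
    (h : ∀ p, p.Prime → (p ∣ a ↔ p ∣ b)) : a = rad b := by
  rw [rad, ← Nat.prod_primeFactors_of_squarefree ha]
  congr 1
  ext p
  simp only [Nat.mem_primeFactors]
  exact ⟨fun ⟨hp, hpa, _⟩ => ⟨hp, (h p hp).1 hpa, hb⟩,
    fun ⟨hp, hpb, _⟩ => ⟨hp, (h p hp).2 hpb, ha.ne_zero⟩⟩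

theorem squarefree_DB (n : ℕ) : Squarefree (DB n) :=
  squarefree_polyDenom fun i => by
    rw [Polynomial.coeff_bernoulli]
    split_ifs
    · exact (squarefree_den_bernoulli _).squarefree_of_dvd
        ((Rat.mul_den_dvd _ _).trans (by rw [Rat.den_natCast, mul_one]))
    · exact squarefree_one

theorem coeff_bernoulli_sub_C_bernoulli (m i : ℕ) :
    (Polynomial.bernoulli m - Polynomial.C (bernoulli m)).coeff i =
      if i = 0 then 0 else (Polynomial.bernoulli m).coeff i := by
  rw [Polynomial.coeff_sub, Polynomial.coeff_C]
  split_ifs with hi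
  · rw [hi, Polynomial.coeff_bernoulli, if_pos (Nat.zero_le m), Nat.sub_zero, Nat.choose_zero_right,
      Nat.cast_one, mul_one, sub_self]
  · rw [sub_zero]

section bernoulliPolynomial

variable {p : ℕ} [hp : Fact p.Prime]

theorem not_prime_dvd_den_bernoulli_zero : ¬ p ∣ (bernoulli 0).den := by
  rw [bernoulli_zero, Rat.den_one, Nat.dvd_one]
  exact hp.out.ne_one

theorem prime_dvd_den_coeff_bernoulli_iff (n i : ℕ) :
    p ∣ ((Polynomial.bernoulli n).coeff i).den ↔
      i ≤ n ∧ p ∣ (bernoulli (n - i)).den ∧ ¬ p ∣ n.choose (n - i) := by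
  rw [Polynomial.coeff_bernoulli]
  split_ifs with hi
  · rw [Rat.prime_dvd_den_mul_natCast_iff hp.out (squarefree_den_bernoulli _),
      Nat.choose_symm hi]
    exact (and_iff_right hi).symm
  · rw [Rat.den_zero, Nat.dvd_one]
    exact iff_of_false hp.out.ne_one (fun h => hi h.1)

theorem prime_dvd_DB_iff {n : ℕ} (hn : n ≠ 0) : p ∣ DB n ↔ p ≤ sd p n ∨ (p - 1) ∣ n := by
  rw [← le_sd_or_dvd_den_bernoulli_iff hp.out hn, le_sd_iff_exists_bernoulli, DB,
    prime_dvd_polyDenom_iff hp.out]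
  simp only [prime_dvd_den_coeff_bernoulli_iff]
  constructor
  · rintro ⟨i, hi, hden, hchoose⟩
    rcases Nat.eq_zero_or_pos i with rfl | hi0
    · exact Or.inr hden
    have hk0 : n - i ≠ 0 := fun h => not_prime_dvd_den_bernoulli_zero (h ▸ hden)
    exact Or.inl ⟨n - i, by omega, by omega, hden, hchoose⟩
  · rintro (⟨k, hk0, hkn, hden, hchoose⟩ | hden)
    · exact ⟨n - k, by omega, by rwa [Nat.sub_sub_self hkn.le], by rwa [Nat.sub_sub_self hkn.le]⟩
    · exact ⟨0, by omega, by rwa [Nat.sub_zero], by simpa using hp.out.ne_one⟩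

theorem prime_dvd_D_iff (m : ℕ) : p ∣ D m ↔ p ≤ sd p m := by
  rw [le_sd_iff_exists_bernoulli, D, prime_dvd_polyDenom_iff hp.out]
  simp only [coeff_bernoulli_sub_C_bernoulli]
  constructor
  · rintro ⟨i, hi⟩
    split_ifs at hi with hi0
    · rw [Rat.den_zero, Nat.dvd_one] at hi
      exact absurd hi hp.out.ne_one
    obtain ⟨him, hden, hchoose⟩ := (prime_dvd_den_coeff_bernoulli_iff m i).1 hi
    have hk0 : m - i ≠ 0 := fun h => not_prime_dvd_den_bernoulli_zero (h ▸ hden)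
    exact ⟨m - i, by omega, by omega, hden, hchoose⟩
  · rintro ⟨k, hk0, hkm, hden, hchoose⟩
    refine ⟨m - k, ?_⟩
    rw [if_neg (by omega), prime_dvd_den_coeff_bernoulli_iff, Nat.sub_sub_self hkm.le]
    exact ⟨by omega, hden, hchoose⟩

theorem prime_dvd_polyDenom_Spoly_iff (n : ℕ) :
    p ∣ polyDenom (Spoly n) ↔ p ∣ n + 1 ∨ p ∣ D (n + 1) := by
  have hcoeff (i : ℕ) : (Spoly n).coeff i = ((n + 1 : ℕ) : ℚ)⁻¹ *
      (Polynomial.bernoulli (n + 1) - Polynomial.C (bernoulli (n + 1))).coeff i := by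
    rw [Spoly, Polynomial.coeff_C_mul, Nat.cast_succ]
  rw [prime_dvd_polyDenom_iff hp.out]
  by_cases hdvd : p ∣ n + 1
  · refine iff_of_true ⟨n + 1, ?_⟩ (Or.inl hdvd)
    rw [hcoeff, coeff_bernoulli_sub_C_bernoulli, if_neg n.succ_ne_zero, Polynomial.coeff_bernoulli,
      if_pos le_rfl, Nat.sub_self, bernoulli_zero, Nat.choose_self, Nat.cast_one, mul_one, mul_one,
      Rat.inv_natCast_den, if_neg n.succ_ne_zero]
    exact hdvd
  · simp only [hcoeff, Rat.prime_dvd_den_inv_natCast_mul_iff hp.out hdvd, hdvd, false_or, D,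
      prime_dvd_polyDenom_iff hp.out]

end bernoulliPolynomial

/-- For `n ≥ 1`, `DB n = rad (denom (S_n(x))) = rad ((n+1) · D_{n+1})`. -/
theorem stmt_4 (n : ℕ) (hn : 1 ≤ n) :
    DB n = rad (polyDenom (Spoly n)) ∧ DB n = rad ((n + 1) * D (n + 1)) := by
  have hn0 : n ≠ 0 := Nat.one_le_iff_ne_zero.1 hn
  have key (p : ℕ) (hp : p.Prime) : p ∣ DB n ↔ p ∣ n + 1 ∨ p ∣ D (n + 1) := by
    have := Fact.mk hp
    rw [prime_dvd_DB_iff hn0, prime_dvd_D_iff, le_sd_or_sub_one_dvd_iff hp.one_lt hn0]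
  refine ⟨eq_rad_of_squarefree (squarefree_DB n) (polyDenom_ne_zero _) fun p hp => ?_,
    eq_rad_of_squarefree (squarefree_DB n) ?_ fun p hp => ?_⟩
  · have := Fact.mk hp
    rw [key p hp, prime_dvd_polyDenom_Spoly_iff]
  · exact mul_ne_zero n.succ_ne_zero (polyDenom_ne_zero _)
  · rw [key p hp, hp.dvd_mul]
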